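/- (Interpolation transfer for equilibrium logic, OW version) Let α, β be formulas over a finite vocabulary. If α has an equilibrium model over V(α) and β is true in every expansion of every equilibrium model of α to V(α) ∪ V(β) (α |~_ow β), then, assuming HT interpolation, there is a formula γ with V(γ) ⊆ V(α) ∩ V(β) such that α |~_ow γ and γ ⊨_HT β. -/

import Mathlib

/-- Propositional formulas over atoms ℕ. -/
inductive Fm where
  | atom : ℕ → Fm
  | bot  : Fm
  | and  : Fm → Fm → Fm
  | or   : Fm → Fm → Fm
  | imp  : Fm → Fm → Fm
deriving DecidableEq

def Fm.neg (φ : Fm) : Fm := Fm.imp φ Fm.bot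
def Fm.top : Fm := Fm.imp Fm.bot Fm.bot

/-- Truth at the "there" world (classical truth in T). -/
def satT (T : Set ℕ) : Fm → Prop
  | .atom a  => a ∈ T
  | .bot     => False
  | .and φ ψ => satT T φ ∧ satT T ψ
  | .or φ ψ  => satT T φ ∨ satT T ψ
  | .imp φ ψ => satT T φ → satT T ψ

/-- Truth at the "here" world of the HT-interpretation ⟨H,T⟩. -/
def satH (H T : Set ℕ) : Fm → Prop
  | .atom a  => a ∈ H
  | .bot     => False
  | .and φ ψ => satH H T φ ∧ satH H T ψ
  | .or φ ψ  => satH H T φ ∨ satH H T ψ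
  | .imp φ ψ => (satH H T φ → satH H T ψ) ∧ (satT T φ → satT T ψ)

/-- ⟨H,T⟩ is an HT-model of φ (true at both worlds). -/
def htSat (H T : Set ℕ) (φ : Fm) : Prop := satH H T φ ∧ satT T φ

/-- ⟨H,T⟩ is an HT-model of the theory Γ. -/
def htSatTh (H T : Set ℕ) (Γ : Set Fm) : Prop := ∀ φ ∈ Γ, htSat H T φ

/-- Atoms occurring in a formula. -/
def vars : Fm → Finset ℕ
  | .atom a  => {a}
  | .bot     => ∅
  | .and φ ψ => vars φ ∪ vars ψ
  | .or φ ψ  => vars φ ∪ vars ψ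
  | .imp φ ψ => vars φ ∪ vars ψ

/-- Atoms occurring in a theory. -/
def varsTh (Γ : Set Fm) : Set ℕ := ⋃ φ ∈ Γ, (vars φ : Set ℕ)

/-- HT-consequence: every world of every HT-interpretation making all of Γ true makes φ true. -/
def htConseqTh (Γ : Set Fm) (φ : Fm) : Prop :=
  ∀ H T : Set ℕ, H ⊆ T →
    ((∀ ψ ∈ Γ, satH H T ψ) → satH H T φ) ∧ ((∀ ψ ∈ Γ, satT T ψ) → satT T φ)

/-- ⟨T,T⟩ is an equilibrium model of Γ over vocabulary V. -/
def eqModel (V : Set ℕ) (Γ : Set Fm) (T : Set ℕ) : Prop :=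
  T ⊆ V ∧ htSatTh T T Γ ∧ ∀ H : Set ℕ, H ⊆ T → H ≠ T → ¬ htSatTh H T Γ

def bigAnd (l : List Fm) : Fm := l.foldr Fm.and Fm.top
def bigOr (l : List Fm) : Fm := l.foldr Fm.or Fm.bot
noncomputable def conjAtoms (s : Finset ℕ) : Fm := bigAnd (s.toList.map Fm.atom)
noncomputable def disjAtoms (s : Finset ℕ) : Fm := bigOr (s.toList.map Fm.atom)
/-- δ_T over vocabulary V : (⋀_{a∈T} a) ∧ ¬(⋁_{a∈V∖T} a). -/
noncomputable def delta (V T : Finset ℕ) : Fm := Fm.and (conjAtoms T) (Fm.neg (disjAtoms (V \ T)))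

/-!
Every property `P` of the `V`-trace `T ∩ V` of an interpretation is defined over `V` by the
disjunction of the formulas `delta V t` over the `t ⊆ V` satisfying `P`. For `P` = "is an
equilibrium model of `α`" this gives a formula `α'` over `vars α`, and since a formula only sees its
own atoms, `α |~_ow φ` is equivalent to `α' ⊨_HT φ`. Interpolating `α' ⊨_HT β` yields `γ` over
`vars α ∩ vars β` with `α' ⊨_HT γ`, i.e. `α |~_ow γ`, and `γ ⊨_HT β`.
-/

lemma satT_congr {φ : Fm} {T T' : Set ℕ} (h : ∀ a ∈ vars φ, a ∈ T ↔ a ∈ T') :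
    satT T φ ↔ satT T' φ := by
  induction φ with
  | atom a => exact h a (Finset.mem_singleton_self a)
  | bot => rfl
  | and φ ψ ihφ ihψ | or φ ψ ihφ ihψ | imp φ ψ ihφ ihψ =>
    simp only [vars, Finset.mem_union, or_imp, forall_and] at h
    simp only [satT, ihφ h.1, ihψ h.2]

lemma satH_congr {φ : Fm} {H T H' T' : Set ℕ} (hH : ∀ a ∈ vars φ, a ∈ H ↔ a ∈ H')
    (hT : ∀ a ∈ vars φ, a ∈ T ↔ a ∈ T') : satH H T φ ↔ satH H' T' φ := by
  induction φ with
  | atom a => exact hH a (Finset.mem_singleton_self a)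
  | bot => rfl
  | and φ ψ ihφ ihψ | or φ ψ ihφ ihψ | imp φ ψ ihφ ihψ =>
    simp only [vars, Finset.mem_union, or_imp, forall_and] at hH hT
    simp only [satH, ihφ hH.1 hT.1, ihψ hH.2 hT.2, satT_congr hT.1, satT_congr hT.2]

lemma satT_inter_of_vars_subset {φ : Fm} {W : Finset ℕ} (hφ : vars φ ⊆ W) (T : Set ℕ) :
    satT (T ∩ W) φ ↔ satT T φ :=
  satT_congr fun _ ha => and_iff_left (Finset.mem_coe.2 (hφ ha))

lemma satH_inter_of_vars_subset {φ : Fm} {W : Finset ℕ} (hφ : vars φ ⊆ W) (H T : Set ℕ) :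
    satH (H ∩ W) (T ∩ W) φ ↔ satH H T φ :=
  satH_congr (fun _ ha => and_iff_left (Finset.mem_coe.2 (hφ ha)))
    (fun _ ha => and_iff_left (Finset.mem_coe.2 (hφ ha)))

lemma htConseqTh_singleton_iff {φ ψ : Fm} : htConseqTh {φ} ψ ↔
    ∀ H T : Set ℕ, H ⊆ T → (satH H T φ → satH H T ψ) ∧ (satT T φ → satT T ψ) := by
  simp only [htConseqTh, Set.mem_singleton_iff, forall_eq]

lemma satT_bigOr {l : List Fm} {T : Set ℕ} : satT T (bigOr l) ↔ ∃ φ ∈ l, satT T φ := by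
  induction l with
  | nil => simp [bigOr, satT]
  | cons φ l ih => simp [bigOr, satT, ← ih]

lemma satH_bigOr {l : List Fm} {H T : Set ℕ} : satH H T (bigOr l) ↔ ∃ φ ∈ l, satH H T φ := by
  induction l with
  | nil => simp [bigOr, satH]
  | cons φ l ih => simp [bigOr, satH, ← ih]

lemma satT_bigAnd {l : List Fm} {T : Set ℕ} : satT T (bigAnd l) ↔ ∀ φ ∈ l, satT T φ := by
  induction l with
  | nil => simp [bigAnd, Fm.top, satT]
  | cons φ l ih => simp [bigAnd, satT, ← ih]

lemma satH_bigAnd {l : List Fm} {H T : Set ℕ} : satH H T (bigAnd l) ↔ ∀ φ ∈ l, satH H T φ := by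
  induction l with
  | nil => simp [bigAnd, Fm.top, satH]
  | cons φ l ih => simp [bigAnd, satH, ← ih]

lemma vars_bigOr_subset {l : List Fm} {W : Finset ℕ} (h : ∀ φ ∈ l, vars φ ⊆ W) :
    vars (bigOr l) ⊆ W := by
  induction l with
  | nil => simp [bigOr, vars]
  | cons φ l ih =>
    simp only [List.forall_mem_cons] at h
    exact Finset.union_subset h.1 (ih h.2)

lemma vars_bigAnd_subset {l : List Fm} {W : Finset ℕ} (h : ∀ φ ∈ l, vars φ ⊆ W) :
    vars (bigAnd l) ⊆ W := by
  induction l with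
  | nil => simp [bigAnd, Fm.top, vars]
  | cons φ l ih =>
    simp only [List.forall_mem_cons] at h
    exact Finset.union_subset h.1 (ih h.2)

lemma satT_conjAtoms {s : Finset ℕ} {T : Set ℕ} : satT T (conjAtoms s) ↔ ↑s ⊆ T := by
  simp [conjAtoms, satT_bigAnd, satT, Set.subset_def]

lemma satH_conjAtoms {s : Finset ℕ} {H T : Set ℕ} : satH H T (conjAtoms s) ↔ ↑s ⊆ H := by
  simp [conjAtoms, satH_bigAnd, satH, Set.subset_def]

lemma satT_disjAtoms {s : Finset ℕ} {T : Set ℕ} : satT T (disjAtoms s) ↔ ∃ a ∈ s, a ∈ T := by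
  simp [disjAtoms, satT_bigOr, satT]

lemma satH_disjAtoms {s : Finset ℕ} {H T : Set ℕ} :
    satH H T (disjAtoms s) ↔ ∃ a ∈ s, a ∈ H := by
  simp [disjAtoms, satH_bigOr, satH]

lemma vars_conjAtoms (s : Finset ℕ) : vars (conjAtoms s) ⊆ s :=
  vars_bigAnd_subset (by simp [vars])

lemma vars_disjAtoms (s : Finset ℕ) : vars (disjAtoms s) ⊆ s :=
  vars_bigOr_subset (by simp [vars])

section delta

variable {V t : Finset ℕ}

lemma vars_delta (ht : t ⊆ V) : vars (delta V t) ⊆ V := by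
  simp only [delta, Fm.neg, vars, Finset.union_empty]
  exact Finset.union_subset ((vars_conjAtoms t).trans ht)
    ((vars_disjAtoms _).trans Finset.sdiff_subset)

lemma satT_delta (ht : t ⊆ V) {T : Set ℕ} : satT T (delta V t) ↔ T ∩ V = t := by
  simp only [delta, Fm.neg, satT, satT_conjAtoms, satT_disjAtoms, Set.ext_iff]
  grind

lemma satH_delta (ht : t ⊆ V) {H T : Set ℕ} (hHT : H ⊆ T) :
    satH H T (delta V t) ↔ H ∩ V = t ∧ T ∩ V = t := by
  simp only [delta, Fm.neg, satH, satT, satH_conjAtoms, satH_disjAtoms, satT_disjAtoms,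
    Set.ext_iff]
  grind

end delta

open Classical in
noncomputable def traceFormula (V : Finset ℕ) (P : Set ℕ → Prop) : Fm :=
  bigOr (((V.powerset.filter fun t : Finset ℕ => P t).toList).map (delta V))

section traceFormula

variable {V : Finset ℕ} {P : Set ℕ → Prop}

open Classical in
lemma exists_mem_traceFormula_disjuncts {p : Fm → Prop} :
    (∃ φ ∈ ((V.powerset.filter fun t : Finset ℕ => P t).toList).map (delta V), p φ) ↔
      ∃ t ⊆ V, P t ∧ p (delta V t) := by
  simp [and_assoc]

lemma satT_traceFormula_iff_exists {T : Set ℕ} :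
    satT T (traceFormula V P) ↔ ∃ t ⊆ V, P t ∧ satT T (delta V t) :=
  satT_bigOr.trans exists_mem_traceFormula_disjuncts

lemma satH_traceFormula_iff_exists {H T : Set ℕ} :
    satH H T (traceFormula V P) ↔ ∃ t ⊆ V, P t ∧ satH H T (delta V t) :=
  satH_bigOr.trans exists_mem_traceFormula_disjuncts

lemma vars_traceFormula_subset : vars (traceFormula V P) ⊆ V :=
  vars_bigOr_subset fun _ hφ => by
    obtain ⟨t, ht, -, rfl⟩ := exists_mem_traceFormula_disjuncts.1 ⟨_, hφ, rfl⟩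
    exact vars_delta ht

lemma exists_finset_trace_iff {T : Set ℕ} :
    (∃ t ⊆ V, P t ∧ T ∩ V = t) ↔ P (T ∩ V) := by
  classical
  refine ⟨fun ⟨t, _, hP, hT⟩ => hT ▸ hP, fun hP => ⟨V.filter (· ∈ T), Finset.filter_subset _ _, ?_⟩⟩
  have trace_eq : ((V.filter (· ∈ T) : Finset ℕ) : Set ℕ) = T ∩ V := by
    ext a
    simp [and_comm]
  exact ⟨trace_eq ▸ hP, trace_eq.symm⟩

lemma satT_traceFormula {T : Set ℕ} : satT T (traceFormula V P) ↔ P (T ∩ V) := by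
  rw [satT_traceFormula_iff_exists, ← exists_finset_trace_iff (P := P)]
  exact exists_congr fun t => and_congr_right fun ht => and_congr_right' (satT_delta ht)

lemma satH_traceFormula {H T : Set ℕ} (hHT : H ⊆ T) :
    satH H T (traceFormula V P) ↔ P (T ∩ V) ∧ H ∩ V = T ∩ V := by
  rw [satH_traceFormula_iff_exists, ← exists_finset_trace_iff (P := fun s => P s ∧ H ∩ V = s)]
  exact exists_congr fun t => and_congr_right fun ht => by rw [satH_delta ht hHT, and_assoc]

end traceFormula

/-- `α |~_ow φ`. -/
def owEntails (α φ : Fm) : Prop :=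
  ∀ T H' T' : Set ℕ, eqModel ((vars α : Finset ℕ) : Set ℕ) {α} T →
    H' ⊆ T' → T' ⊆ ((vars α ∪ vars φ : Finset ℕ) : Set ℕ) →
    H' ∩ ((vars α : Finset ℕ) : Set ℕ) = T → T' ∩ ((vars α : Finset ℕ) : Set ℕ) = T →
    htSat H' T' φ

/-- The formula `α'`. -/
noncomputable def eqModelFormula (α : Fm) : Fm :=
  traceFormula (vars α) (eqModel (vars α) {α})

theorem owEntails_iff_htConseqTh_eqModelFormula {α φ : Fm} :
    owEntails α φ ↔ htConseqTh {eqModelFormula α} φ := by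
  set V := vars α
  set W := vars α ∪ vars φ
  rw [htConseqTh_singleton_iff]
  constructor
  · intro hφ H T hHT
    have hVW : (V : Set ℕ) ⊆ W := Finset.coe_subset.2 Finset.subset_union_left
    have trace_eq (X : Set ℕ) : X ∩ W ∩ V = X ∩ V := by
      rw [Set.inter_assoc, Set.inter_eq_right.2 hVW]
    refine ⟨fun hH => ?_, fun hT => ?_⟩
    · obtain ⟨heq, hHV⟩ := (satH_traceFormula hHT).1 hH
      have := hφ (T ∩ V) (H ∩ W) (T ∩ W) heq (Set.inter_subset_inter_left _ hHT)
        Set.inter_subset_right (by rw [trace_eq, hHV]) (trace_eq T)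
      exact (satH_inter_of_vars_subset Finset.subset_union_right H T).1 this.1
    · have := hφ (T ∩ V) (T ∩ W) (T ∩ W) (satT_traceFormula.1 hT) subset_rfl
        Set.inter_subset_right (trace_eq T) (trace_eq T)
      exact (satT_inter_of_vars_subset Finset.subset_union_right T).1 this.2
  · rintro hφ _ H' T' heq hHT' - hH rfl
    have := hφ H' T' hHT'
    exact ⟨this.1 ((satH_traceFormula hHT').2 ⟨heq, hH⟩), this.2 (satT_traceFormula.2 heq)⟩

theorem ow_interpolation_general (α β : Fm)
    (how : ∀ T H' T' : Set ℕ, eqModel ((vars α : Finset ℕ) : Set ℕ) {α} T →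
      H' ⊆ T' → T' ⊆ ((vars α ∪ vars β : Finset ℕ) : Set ℕ) →
      H' ∩ ((vars α : Finset ℕ) : Set ℕ) = T → T' ∩ ((vars α : Finset ℕ) : Set ℕ) = T →
      htSat H' T' β)
    (hinterp : ∀ φ ψ : Fm, htConseqTh {φ} ψ →
      ∃ ξ : Fm, vars ξ ⊆ vars φ ∩ vars ψ ∧ htConseqTh {φ} ξ ∧ htConseqTh {ξ} ψ) :
    ∃ γ : Fm, vars γ ⊆ vars α ∩ vars β ∧
      (∀ T H' T' : Set ℕ, eqModel ((vars α : Finset ℕ) : Set ℕ) {α} T →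
        H' ⊆ T' → T' ⊆ ((vars α ∪ vars γ : Finset ℕ) : Set ℕ) →
        H' ∩ ((vars α : Finset ℕ) : Set ℕ) = T → T' ∩ ((vars α : Finset ℕ) : Set ℕ) = T →
        htSat H' T' γ) ∧
      htConseqTh {γ} β := by
  obtain ⟨γ, hγ, hαγ, hγβ⟩ :=
    hinterp (eqModelFormula α) β (owEntails_iff_htConseqTh_eqModelFormula.1 how)
  exact ⟨γ, hγ.trans (Finset.inter_subset_inter_right vars_traceFormula_subset),
    owEntails_iff_htConseqTh_eqModelFormula.2 hαγ, hγβ⟩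

/-- interpolation transfer for open-world equilibrium entailment. -/
theorem ow_interpolation (α β : Fm)
    (hcoh : ∃ T : Set ℕ, eqModel ((vars α : Finset ℕ) : Set ℕ) {α} T)
    (how : ∀ T H' T' : Set ℕ, eqModel ((vars α : Finset ℕ) : Set ℕ) {α} T →
      H' ⊆ T' → T' ⊆ ((vars α ∪ vars β : Finset ℕ) : Set ℕ) →
      H' ∩ ((vars α : Finset ℕ) : Set ℕ) = T → T' ∩ ((vars α : Finset ℕ) : Set ℕ) = T →
      htSat H' T' β)
    (hinterp : ∀ φ ψ : Fm, htConseqTh {φ} ψ →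
      ∃ ξ : Fm, vars ξ ⊆ vars φ ∩ vars ψ ∧ htConseqTh {φ} ξ ∧ htConseqTh {ξ} ψ) :
    ∃ γ : Fm, vars γ ⊆ vars α ∩ vars β ∧
      (∀ T H' T' : Set ℕ, eqModel ((vars α : Finset ℕ) : Set ℕ) {α} T →
        H' ⊆ T' → T' ⊆ ((vars α ∪ vars γ : Finset ℕ) : Set ℕ) →
        H' ∩ ((vars α : Finset ℕ) : Set ℕ) = T → T' ∩ ((vars α : Finset ℕ) : Set ℕ) = T →
        htSat H' T' γ) ∧
      htConseqTh {γ} β :=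
  ow_interpolation_general α β how hinterp
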